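/- For every integer p ≥ 2 and every m ≥ 0, one has Σ_{k=1}^{m+1} |P_p(k)| ≤ Σ_{k=1}^{m+1} B^k, where B = 1/|x0| ≈ 1.80193 and x0 ≈ 0.55496 is the root of smallest absolute value of the polynomial x³ − 2x² − x + 1. (The left-hand side equals the cardinality |Δ_m^{(1,1)}| of the dependency set of the root of the 2-tree with respect to the single multiplicative constraint p in the first direction.) -/

import Mathlib

/-- Compositions of `n` (ordered tuples of positive integers summing to `n`,
encoded as lists) all of whose parts lie in `{1} ∪ {p^k : k ≥ 1}`. -/
def compPow (p n : ℕ) : Set (List ℕ) :=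
  {l | l.sum = n ∧ ∀ a ∈ l, a = 1 ∨ ∃ k, 1 ≤ k ∧ a = p ^ k}

/-- The set `{p^k − 1 : k ≥ 1}`. -/
def partsPm1 (p : ℕ) : Set ℕ := {a | ∃ k, 1 ≤ k ∧ a = p ^ k - 1}

/-- Compositions of `n` whose parts alternate between `{p1^k − 1 : k ≥ 1}` and
`{p2^k − 1 : k ≥ 1}` (starting with either set). -/
def altComp (p1 p2 n : ℕ) : Set (List ℕ) :=
  {l | l.sum = n ∧
    ((∀ t, t < l.length →
        (t % 2 = 0 → l.getD t 0 ∈ partsPm1 p1) ∧ (t % 2 = 1 → l.getD t 0 ∈ partsPm1 p2)) ∨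
     (∀ t, t < l.length →
        (t % 2 = 0 → l.getD t 0 ∈ partsPm1 p2) ∧ (t % 2 = 1 → l.getD t 0 ∈ partsPm1 p1)))}

/-- Compositions of `n` all of whose parts lie in `{1, 2} ∪ {2k : k ≥ 2}`. -/
def compA (n : ℕ) : Set (List ℕ) :=
  {l | l.sum = n ∧ ∀ a ∈ l, a = 1 ∨ a = 2 ∨ ∃ k, 2 ≤ k ∧ a = 2 * k}

/-!
Let `c(n)` count the compositions of `n` with parts in a set `S` of positive integers. Removing
the first part gives `c(n) ≤ ∑_{a ∈ S, a ≤ n} c(n - a)`, so by strong induction `c(n) ≤ r⁻ⁿ`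
for every `r > 0` with `∑_{a ∈ S} rᵃ ≤ 1`. For `S = {1} ∪ {pᵏ : k ≥ 1}` we have `pᵏ ≥ 2ᵏ` and
`2ᵏ ≥ 4(k - 1)`, whence `∑_{a ∈ S} rᵃ ≤ r + r² + r⁴ / (1 - r⁴)`, which is at most `1` for
`r ≤ 0.556`. Finally `|x0| ≤ 0.556` because the cubic changes sign on `[0.554, 0.556]`.
-/

open Finset

def compositionsWith (S : ℕ → Prop) (n : ℕ) : Set (List ℕ) :=
  {l | l.sum = n ∧ ∀ a ∈ l, S a}

section compositionsWith

variable {S : ℕ → Prop}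

theorem compositionsWith_zero_subset (hS : ∀ a, S a → 0 < a) :
    compositionsWith S 0 ⊆ {[]} := by
  rintro (_ | ⟨a, t⟩) ⟨hsum, hparts⟩
  · rfl
  · have := hS a (hparts a List.mem_cons_self)
    simp only [List.sum_cons] at hsum
    omega

theorem compositionsWith_succ [DecidablePred S] (hS : ∀ a, S a → 0 < a) (n : ℕ) :
    compositionsWith S (n + 1) =
      ⋃ a ∈ {a ∈ Icc 1 (n + 1) | S a}, (a :: ·) '' compositionsWith S (n + 1 - a) := by
  ext l
  simp only [compositionsWith, Set.mem_iUnion, Set.mem_image, Set.mem_ofPred_eq, mem_filter,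
    mem_Icc, exists_prop]
  constructor
  · rintro ⟨hsum, hparts⟩
    cases l with
    | nil => simp at hsum
    | cons a t =>
      simp only [List.sum_cons, List.forall_mem_cons] at hsum hparts
      have ha := hS a hparts.1
      exact ⟨a, ⟨⟨ha, by omega⟩, hparts.1⟩, t, ⟨by omega, hparts.2⟩, rfl⟩
  · rintro ⟨a, ⟨⟨ha, han⟩, hSa⟩, t, ⟨ht, htS⟩, rfl⟩
    simp only [List.sum_cons, List.forall_mem_cons]
    exact ⟨by omega, hSa, htS⟩

theorem ncard_compositionsWith_succ_le [DecidablePred S] (hS : ∀ a, S a → 0 < a) (n : ℕ) :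
    (compositionsWith S (n + 1)).ncard ≤
      ∑ a ∈ {a ∈ Icc 1 (n + 1) | S a}, (compositionsWith S (n + 1 - a)).ncard := by
  rw [compositionsWith_succ hS]
  refine (set_ncard_biUnion_le _ _).trans_eq (sum_congr rfl fun a _ => ?_)
  exact Set.ncard_image_of_injective _ List.cons_injective

theorem ncard_compositionsWith_le_inv_pow [DecidablePred S] (hS : ∀ a, S a → 0 < a) {r : ℝ}
    (hr : 0 < r) (hweight : ∀ n, ∑ a ∈ {a ∈ Icc 1 n | S a}, r ^ a ≤ 1) (n : ℕ) :
    ((compositionsWith S n).ncard : ℝ) ≤ r⁻¹ ^ n := by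
  induction n using Nat.strong_induction_on with
  | _ n ih =>
  cases n with
  | zero =>
    simpa using Set.ncard_le_ncard (compositionsWith_zero_subset hS)
  | succ n =>
    calc ((compositionsWith S (n + 1)).ncard : ℝ)
        ≤ ∑ a ∈ {a ∈ Icc 1 (n + 1) | S a}, ((compositionsWith S (n + 1 - a)).ncard : ℝ) := by
          exact_mod_cast ncard_compositionsWith_succ_le hS n
      _ ≤ ∑ a ∈ {a ∈ Icc 1 (n + 1) | S a}, r⁻¹ ^ (n + 1) * r ^ a := by
          refine sum_le_sum fun a ha => ?_
          obtain ⟨ha1, han⟩ := mem_Icc.1 (mem_filter.1 ha).1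
          rw [← inv_inv (r ^ a), ← inv_pow, ← pow_sub₀ _ (inv_ne_zero hr.ne') han]
          exact ih _ (by omega)
      _ = r⁻¹ ^ (n + 1) * ∑ a ∈ {a ∈ Icc 1 (n + 1) | S a}, r ^ a := (mul_sum _ _ _).symm
      _ ≤ r⁻¹ ^ (n + 1) := mul_le_of_le_one_right (by positivity) (hweight _)

end compositionsWith

theorem sum_range_pow_two_pow_le {r : ℝ} (hr0 : 0 ≤ r) (hr1 : r < 1) (n : ℕ) :
    ∑ k ∈ range n, r ^ 2 ^ k ≤ r + r ^ 2 + r ^ 4 / (1 - r ^ 4) := by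
  have hr4 : r ^ 4 < 1 := pow_lt_one₀ hr0 hr1 (by norm_num)
  have htail : ∀ k, r ^ 2 ^ (k + 2) ≤ (r ^ 4) ^ (k + 1) := fun k => by
    rw [← pow_mul]
    refine pow_le_pow_of_le_one hr0 hr1.le ?_
    have := Nat.lt_two_pow_self (n := k)
    rw [pow_add]
    omega
  calc ∑ k ∈ range n, r ^ 2 ^ k ≤ ∑ k ∈ range (n + 2), r ^ 2 ^ k :=
        sum_le_sum_of_subset_of_nonneg (range_subset_range.2 (by omega))
          fun _ _ _ => by positivity
    _ = ∑ k ∈ range n, r ^ 2 ^ (k + 2) + r ^ 2 + r := by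
        rw [sum_range_succ', sum_range_succ']
        norm_num
    _ ≤ ∑ k ∈ Ico 1 (n + 1), (r ^ 4) ^ k + r ^ 2 + r := by
        rw [sum_Ico_eq_sum_range, Nat.add_sub_cancel]
        gcongr with k
        rw [add_comm 1 k]
        exact htail k
    _ ≤ r ^ 4 / (1 - r ^ 4) + r ^ 2 + r := by
        gcongr
        simpa using geom_sum_Ico_le_of_lt_one (m := 1) (n := n + 1) (by positivity) hr4
    _ = r + r ^ 2 + r ^ 4 / (1 - r ^ 4) := by ring

open Classical in
theorem sum_filter_one_or_pow_le {p : ℕ} (hp : 2 ≤ p) {r : ℝ} (hr0 : 0 ≤ r) (hr1 : r < 1)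
    (n : ℕ) :
    ∑ a ∈ {a ∈ Icc 1 n | a = 1 ∨ ∃ k, 1 ≤ k ∧ a = p ^ k}, r ^ a ≤
      r + r ^ 2 + r ^ 4 / (1 - r ^ 4) := by
  have hsub : {a ∈ Icc 1 n | a = 1 ∨ ∃ k, 1 ≤ k ∧ a = p ^ k} ⊆ (range n).image (p ^ ·) := by
    intro a ha
    simp only [mem_filter, mem_Icc] at ha
    obtain ⟨⟨ha1, han⟩, rfl | ⟨k, -, rfl⟩⟩ := ha
    · exact mem_image.2 ⟨0, mem_range.2 (by omega), pow_zero p⟩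
    · refine mem_image.2 ⟨k, mem_range.2 ?_, rfl⟩
      calc k < 2 ^ k := Nat.lt_two_pow_self
        _ ≤ p ^ k := Nat.pow_le_pow_left hp k
        _ ≤ n := han
  calc ∑ a ∈ {a ∈ Icc 1 n | a = 1 ∨ ∃ k, 1 ≤ k ∧ a = p ^ k}, r ^ a
      ≤ ∑ a ∈ (range n).image (p ^ ·), r ^ a :=
        sum_le_sum_of_subset_of_nonneg hsub fun _ _ _ => by positivity
    _ ≤ ∑ k ∈ range n, r ^ p ^ k := sum_image_le_of_nonneg fun _ _ => by positivity
    _ ≤ ∑ k ∈ range n, r ^ 2 ^ k :=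
        sum_le_sum fun k _ => pow_le_pow_of_le_one hr0 hr1.le (Nat.pow_le_pow_left hp k)
    _ ≤ r + r ^ 2 + r ^ 4 / (1 - r ^ 4) := sum_range_pow_two_pow_le hr0 hr1 n

theorem add_sq_add_pow_four_div_le_one {r : ℝ} (hr0 : 0 ≤ r) (hr : r ≤ 139 / 250) :
    r + r ^ 2 + r ^ 4 / (1 - r ^ 4) ≤ 1 := by
  have hc : (0 : ℝ) < 1 - (139 / 250) ^ 4 := by norm_num
  calc r + r ^ 2 + r ^ 4 / (1 - r ^ 4)
      ≤ 139 / 250 + (139 / 250) ^ 2 + (139 / 250) ^ 4 / (1 - (139 / 250) ^ 4) := by gcongr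
    _ ≤ 1 := by norm_num

theorem exists_cubic_root_mem_Icc :
    ∃ y ∈ Set.Icc (277 / 500 : ℝ) (139 / 250), y ^ 3 - 2 * y ^ 2 - y + 1 = 0 :=
  intermediate_value_Icc' (by norm_num) (by fun_prop) ⟨by norm_num, by norm_num⟩

/-- Lemma 3.4 (left inequality): `Σ_{k=1}^{m+1} |P_p(k)| ≤ Σ_{k=1}^{m+1} B^k`,
where `B = 1/|x0|` and `x0` is the root of `x³ − 2x² − x + 1` of smallest absolute value. -/
theorem sum_card_compPow_le (p : ℕ) (hp : 2 ≤ p)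
    (x0 : ℝ)
    (hroot : x0 ^ 3 - 2 * x0 ^ 2 - x0 + 1 = 0)
    (hmin : ∀ y : ℝ, y ^ 3 - 2 * y ^ 2 - y + 1 = 0 → |x0| ≤ |y|) :
    ∀ m : ℕ,
      (∑ k ∈ Finset.Icc 1 (m + 1), (Nat.card (compPow p k) : ℝ)) ≤
        ∑ k ∈ Finset.Icc 1 (m + 1), (1 / |x0|) ^ k := by
  intro m
  classical
  obtain ⟨y, hy, hy_root⟩ := exists_cubic_root_mem_Icc
  have hx0_pos : 0 < |x0| := abs_pos.2 (by rintro rfl; norm_num at hroot)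
  have hx0_le : |x0| ≤ 139 / 250 :=
    (hmin y hy_root).trans ((abs_of_nonneg (by linarith [hy.1])).trans_le hy.2)
  have hweight (n : ℕ) :
      ∑ a ∈ {a ∈ Icc 1 n | a = 1 ∨ ∃ k, 1 ≤ k ∧ a = p ^ k}, |x0| ^ a ≤ 1 :=
    (sum_filter_one_or_pow_le hp hx0_pos.le (by linarith) n).trans
      (add_sq_add_pow_four_div_le_one hx0_pos.le hx0_le)
  have hparts_pos (a : ℕ) (ha : a = 1 ∨ ∃ k, 1 ≤ k ∧ a = p ^ k) : 0 < a := by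
    obtain rfl | ⟨k, -, rfl⟩ := ha
    exacts [one_pos, pow_pos (by omega) k]
  refine sum_le_sum fun k _ => ?_
  rw [Nat.card_coe_set_eq, one_div]
  exact ncard_compositionsWith_le_inv_pow hparts_pos hx0_pos hweight k
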